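/- Let N = (G, c) be a flow network. For all A ⊆ Ein and all B1, B2 ⊆ Eout with B1 ∩ B2 = ∅: maxFromToAft_N(A, B1 | A, B2) = maxFromTo_N(A, B1 ∪ B2) − maxFromTo_N(A, B2). -/

import Mathlib

open Finset

/-- A flow network: a finite vertex set `V`, a finite edge set `E` partitioned into
input edges `Ein`, output edges `Eout` and internal edges `Eint`; each internal edge
has two distinct endpoints `tail e` and `head e` (with at most one internal edge per
`(tail, head)` pair), each input edge has a head only, each output edge a tail only
(values of `tail`/`head` outside their intended domains are irrelevant junk); and a
nonnegative upper-bound capacity `cap`. -/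
structure FlowNetwork (V E : Type) [Fintype V] [Fintype E]
    [DecidableEq V] [DecidableEq E] where
  Ein : Finset E
  Eout : Finset E
  Eint : Finset E
  cover : Ein ∪ Eout ∪ Eint = Finset.univ
  disj_in_out : Disjoint Ein Eout
  disj_in_int : Disjoint Ein Eint
  disj_out_int : Disjoint Eout Eint
  tail : E → V
  head : E → V
  no_self_loop : ∀ e ∈ Eint, tail e ≠ head e
  no_multi : ∀ e ∈ Eint, ∀ e' ∈ Eint, tail e = tail e' → head e = head e' → e = e'
  cap : E → ℝ
  cap_nonneg : ∀ e, 0 ≤ cap e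

namespace FlowNetwork

variable {V E : Type} [Fintype V] [Fintype E] [DecidableEq V] [DecidableEq E]

/-- A flow `f : E → ℝ≥0` is feasible if it conserves flow at every vertex and
respects the capacity of every edge. -/
def Feasible (N : FlowNetwork V E) (f : E → ℝ) : Prop :=
  (∀ e, 0 ≤ f e) ∧ (∀ e, f e ≤ N.cap e) ∧
  ∀ v : V,
    ∑ e ∈ (N.Ein ∪ N.Eint).filter (fun e => N.head e = v), f e =
    ∑ e ∈ (N.Eout ∪ N.Eint).filter (fun e => N.tail e = v), f e

/-- `maxFromTo N A B`: the supremum of `f(A)` over all feasible flows `f` that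
vanish on `(Ein \ A) ∪ (Eout \ B)`. -/
noncomputable def maxFromTo (N : FlowNetwork V E) (A B : Finset E) : ℝ :=
  sSup {x : ℝ | ∃ f : E → ℝ, N.Feasible f ∧
    (∀ e ∈ (N.Ein \ A) ∪ (N.Eout \ B), f e = 0) ∧ x = ∑ e ∈ A, f e}


/-- `maxFromToAftOut N A B1 B2` = `maxFromToAft N (A, B1 | A, B2)`: the supremum of
`f(B1)` over all pairs `(f, f')` of nonnegative functions with `f + f'` feasible,
`f'(A) = f'(B2) = maxFromTo N A B2`, and `f + f'` vanishing on
`(Ein \ A) ∪ (Eout \ (B1 ∪ B2))`. -/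
noncomputable def maxFromToAftOut (N : FlowNetwork V E) (A B1 B2 : Finset E) : ℝ :=
  sSup {x : ℝ | ∃ f f' : E → ℝ, (∀ e, 0 ≤ f e) ∧ (∀ e, 0 ≤ f' e) ∧
    N.Feasible (f + f') ∧
    ∑ e ∈ A, f' e = N.maxFromTo A B2 ∧ ∑ e ∈ B2, f' e = N.maxFromTo A B2 ∧
    (∀ e ∈ (N.Ein \ A) ∪ (N.Eout \ (B1 ∪ B2)), f e + f' e = 0) ∧
    x = ∑ e ∈ B1, f e}

/-!
The flow `f + f'` into `B1 ∪ B2` has value at most `M(A, B1 ∪ B2)` and at least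
`f(B1) + f'(B2) = f(B1) + M(A, B2)`, which gives `≤`. For `≥` one needs a maximum flow `g` into
`B1 ∪ B2` that also sends `M(A, B2)` into `B2`; then `f'` is `g` on `B2` plus a share of `g` on `A`.

Such a `g` comes from augmenting paths. Among the flows into `B1 ∪ B2` sending at least `M(A, B2)`
into `B2`, take one of maximal value. If it were not a maximum flow, the difference `d` to a
maximum flow would carry positive flow into the outputs. The vertices from which the residual
graph of `d` reaches an output edge with `d > 0` form a set that `d` never enters along an
internal edge but leaves through such an output edge, so by conservation `d` enters it through
an input edge with `d > 0`. Augmenting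
along the resulting residual path raises the value, and no output edge loses flow. The same
argument shows that no flow sends more than `M(A, B2)` into `B2`.
-/

open Relation Filter Topology

def IsConformal {ι : Type*} (χ d : ι → ℝ) : Prop :=
  (∀ e, 0 < χ e → 0 < d e) ∧ ∀ e, χ e < 0 → d e < 0

theorem IsConformal.add {ι : Type*} {χ₁ χ₂ d : ι → ℝ} (h₁ : IsConformal χ₁ d)
    (h₂ : IsConformal χ₂ d) : IsConformal (χ₁ + χ₂) d := by
  refine ⟨fun e he => ?_, fun e he => ?_⟩ <;> simp only [Pi.add_apply] at he
  · rcases lt_or_ge 0 (χ₁ e) with h | h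
    exacts [h₁.1 e h, h₂.1 e (by linarith)]
  · rcases lt_or_ge (χ₁ e) 0 with h | h
    exacts [h₁.2 e h, h₂.2 e (by linarith)]

theorem isConformal_piSingle {ι : Type*} [DecidableEq ι] {d : ι → ℝ} {e₀ : ι} {σ : ℝ}
    (h : 0 < σ * d e₀) : IsConformal (Pi.single e₀ σ) d := by
  refine ⟨fun e he => ?_, fun e he => ?_⟩ <;>
  · obtain rfl : e = e₀ := by by_contra hne; simp [hne] at he
    simp only [Pi.single_eq_same] at he
    nlinarith

section

variable (N : FlowNetwork V E)

theorem notMem_Eint_of_mem_Ein {e : E} (he : e ∈ N.Ein) : e ∉ N.Eint :=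
  Finset.disjoint_left.1 N.disj_in_int he

theorem notMem_Eint_of_mem_Eout {e : E} (he : e ∈ N.Eout) : e ∉ N.Eint :=
  Finset.disjoint_left.1 N.disj_out_int he

theorem notMem_Eout_of_mem_Ein {e : E} (he : e ∈ N.Ein) : e ∉ N.Eout :=
  Finset.disjoint_left.1 N.disj_in_out he

def netInflow : (E → ℝ) →ₗ[ℝ] V → ℝ where
  toFun f v := ∑ e ∈ N.Ein ∪ N.Eint with N.head e = v, f e -
    ∑ e ∈ N.Eout ∪ N.Eint with N.tail e = v, f e
  map_add' f g := by
    ext v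
    simp only [Pi.add_apply, sum_add_distrib]
    ring
  map_smul' c f := by
    ext v
    simp only [Pi.smul_apply, smul_eq_mul, ← mul_sum, RingHom.id_apply, mul_sub]

theorem feasible_iff {f : E → ℝ} :
    N.Feasible f ↔ (∀ e, 0 ≤ f e) ∧ (∀ e, f e ≤ N.cap e) ∧ N.netInflow f = 0 := by
  simp only [Feasible, funext_iff, netInflow, LinearMap.coe_mk, AddHom.coe_mk, Pi.zero_apply,
    sub_eq_zero]

theorem netInflow_piSingle (e : E) (v : V) :
    N.netInflow (Pi.single e 1) v =
      (if e ∈ N.Ein ∪ N.Eint ∧ N.head e = v then 1 else 0) -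
        (if e ∈ N.Eout ∪ N.Eint ∧ N.tail e = v then 1 else 0) := by
  simp only [netInflow, LinearMap.coe_mk, AddHom.coe_mk, sum_pi_single', mem_filter]

theorem netInflow_piSingle_of_mem_Ein {a : E} (ha : a ∈ N.Ein) :
    N.netInflow (Pi.single a 1) = Pi.single (N.head a) 1 := by
  ext v
  simp [netInflow_piSingle, ha, N.notMem_Eint_of_mem_Ein ha, N.notMem_Eout_of_mem_Ein ha,
    Pi.single_apply, eq_comm]

theorem netInflow_piSingle_of_mem_Eout {b : E} (hb : b ∈ N.Eout) :
    N.netInflow (Pi.single b 1) = -Pi.single (N.tail b) 1 := by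
  ext v
  have : b ∉ N.Ein := fun h => N.notMem_Eout_of_mem_Ein h hb
  simp [netInflow_piSingle, hb, this, N.notMem_Eint_of_mem_Eout hb, Pi.single_apply, eq_comm]

theorem netInflow_piSingle_of_mem_Eint {e : E} (he : e ∈ N.Eint) :
    N.netInflow (Pi.single e 1) = Pi.single (N.head e) 1 - Pi.single (N.tail e) 1 := by
  ext v
  simp [netInflow_piSingle, he, Pi.single_apply, eq_comm]

theorem sum_netInflow (f : E → ℝ) (S : Finset V) :
    ∑ v ∈ S, N.netInflow f v =
      ∑ e ∈ N.Ein ∪ N.Eint with N.head e ∈ S, f e -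
        ∑ e ∈ N.Eout ∪ N.Eint with N.tail e ∈ S, f e := by
  simp only [netInflow, LinearMap.coe_mk, AddHom.coe_mk, sum_sub_distrib,
    sum_fiberwise_eq_sum_filter]

theorem sum_Ein_eq_sum_Eout {f : E → ℝ} (hf : N.netInflow f = 0) :
    ∑ e ∈ N.Ein, f e = ∑ e ∈ N.Eout, f e := by
  have h := N.sum_netInflow f univ
  simp only [hf, Pi.zero_apply, sum_const_zero, mem_univ, filter_true,
    sum_union N.disj_in_int, sum_union N.disj_out_int] at h
  linarith

def flowsFromTo (A B : Finset E) : Set (E → ℝ) :=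
  {f | N.Feasible f ∧ ∀ e ∈ (N.Ein \ A) ∪ (N.Eout \ B), f e = 0}

variable {N}

theorem flowsFromTo_mono {A B B' : Finset E} (h : B ⊆ B') :
    N.flowsFromTo A B ⊆ N.flowsFromTo A B' := fun _ hf =>
  ⟨hf.1, fun e he => hf.2 e (union_subset_union_right (sdiff_subset_sdiff subset_rfl h) he)⟩

theorem sum_eq_sum_of_mem_flowsFromTo {A B : Finset E} (hA : A ⊆ N.Ein) (hB : B ⊆ N.Eout)
    {f : E → ℝ} (hf : f ∈ N.flowsFromTo A B) : ∑ e ∈ B, f e = ∑ e ∈ A, f e := by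
  have h := N.sum_Ein_eq_sum_Eout ((N.feasible_iff.1 hf.1).2.2)
  rwa [← sum_subset hA fun e he heA => hf.2 e (mem_union_left _ (mem_sdiff.2 ⟨he, heA⟩)),
    ← sum_subset hB fun e he heB => hf.2 e (mem_union_right _ (mem_sdiff.2 ⟨he, heB⟩)),
    eq_comm] at h

variable (N)

theorem zero_mem_flowsFromTo (A B : Finset E) : 0 ∈ N.flowsFromTo A B :=
  ⟨N.feasible_iff.2 ⟨fun _ => le_rfl, N.cap_nonneg, map_zero _⟩, fun _ _ => rfl⟩

theorem isCompact_flowsFromTo (A B : Finset E) : IsCompact (N.flowsFromTo A B) := by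
  have h : N.flowsFromTo A B = (Set.Icc 0 N.cap ∩ N.netInflow ⁻¹' {0}) ∩
      ⋂ e ∈ (N.Ein \ A) ∪ (N.Eout \ B), {f | f e = 0} := by
    ext f
    simp [flowsFromTo, feasible_iff, Pi.le_def, and_assoc]
  rw [h]
  refine isCompact_Icc.of_isClosed_subset ?_ fun f hf => hf.1.1
  exact (isClosed_Icc.inter
    (isClosed_singleton.preimage N.netInflow.continuous_of_finiteDimensional)).inter
    (isClosed_biInter fun e _ => isClosed_eq (continuous_apply e) continuous_const)

theorem maxFromTo_eq_sSup_image (A B : Finset E) :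
    N.maxFromTo A B = sSup ((fun f => ∑ e ∈ A, f e) '' N.flowsFromTo A B) := by
  simp only [maxFromTo, flowsFromTo, Set.image, Set.mem_ofPred_eq, and_assoc, eq_comm]

variable {N}

theorem le_maxFromTo {A B : Finset E} {f : E → ℝ} (hf : f ∈ N.flowsFromTo A B) :
    ∑ e ∈ A, f e ≤ N.maxFromTo A B := by
  rw [maxFromTo_eq_sSup_image]
  exact le_csSup ⟨∑ e ∈ A, N.cap e, by
    rintro _ ⟨g, hg, rfl⟩
    exact sum_le_sum fun e _ => (N.feasible_iff.1 hg.1).2.1 e⟩ ⟨f, hf, rfl⟩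

variable (N)

theorem maxFromTo_nonneg (A B : Finset E) : 0 ≤ N.maxFromTo A B := by
  simpa using le_maxFromTo (N.zero_mem_flowsFromTo A B)

theorem exists_sum_eq_maxFromTo (A B : Finset E) :
    ∃ f ∈ N.flowsFromTo A B, ∑ e ∈ A, f e = N.maxFromTo A B := by
  obtain ⟨f, hf, hmax⟩ := (N.isCompact_flowsFromTo A B).exists_isMaxOn
    ⟨0, N.zero_mem_flowsFromTo A B⟩
    (continuous_finsetSum A fun e _ => continuous_apply e).continuousOn
  have hgreatest : IsGreatest ((fun f => ∑ e ∈ A, f e) '' N.flowsFromTo A B) (∑ e ∈ A, f e) :=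
    ⟨⟨f, hf, rfl⟩, by rintro _ ⟨g, hg, rfl⟩; exact hmax hg⟩
  exact ⟨f, hf, by rw [maxFromTo_eq_sSup_image, hgreatest.csSup_eq]⟩

theorem maxFromTo_mono {A B B' : Finset E} (h : B ⊆ B') :
    N.maxFromTo A B ≤ N.maxFromTo A B' := by
  obtain ⟨f, hf, hfA⟩ := N.exists_sum_eq_maxFromTo A B
  exact hfA ▸ le_maxFromTo (flowsFromTo_mono h hf)

def ResidualAdj (d : E → ℝ) (u w : V) : Prop :=
  ∃ e ∈ N.Eint, (N.tail e = u ∧ N.head e = w ∧ 0 < d e) ∨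
    (N.tail e = w ∧ N.head e = u ∧ d e < 0)

structure IsResidualUnitFlow (d θ : E → ℝ) (v u : V) : Prop where
  support : ∀ e ∉ N.Eint, θ e = 0
  conformal : IsConformal θ d
  netInflow_eq : N.netInflow θ = Pi.single u 1 - Pi.single v 1

variable {N}

theorem IsResidualUnitFlow.add {d θ₁ θ₂ : E → ℝ} {v w u : V}
    (h₁ : N.IsResidualUnitFlow d θ₁ v w) (h₂ : N.IsResidualUnitFlow d θ₂ w u) :
    N.IsResidualUnitFlow d (θ₁ + θ₂) v u where
  support e he := by simp [h₁.support e he, h₂.support e he]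
  conformal := h₁.conformal.add h₂.conformal
  netInflow_eq := by rw [map_add, h₁.netInflow_eq, h₂.netInflow_eq]; abel

theorem ResidualAdj.exists_isResidualUnitFlow {d : E → ℝ} {u w : V} (h : N.ResidualAdj d u w) :
    ∃ θ, N.IsResidualUnitFlow d θ u w := by
  obtain ⟨e, he, ⟨rfl, rfl, hd⟩ | ⟨rfl, rfl, hd⟩⟩ := h
  · refine ⟨Pi.single e 1, fun e' he' => ?_, isConformal_piSingle (by simpa), ?_⟩
    · exact Pi.single_eq_of_ne (by rintro rfl; exact he' he) 1
    · rw [netInflow_piSingle_of_mem_Eint N he]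
  · refine ⟨Pi.single e (-1), fun e' he' => ?_, isConformal_piSingle (by simpa), ?_⟩
    · exact Pi.single_eq_of_ne (by rintro rfl; exact he' he) _
    · rw [Pi.single_neg, map_neg, netInflow_piSingle_of_mem_Eint N he, neg_sub]

theorem exists_isResidualUnitFlow {d : E → ℝ} {v u : V} (h : ReflTransGen (N.ResidualAdj d) v u) :
    ∃ θ, N.IsResidualUnitFlow d θ v u := by
  induction h using ReflTransGen.head_induction_on with
  | refl => exact ⟨0, fun _ _ => rfl, ⟨fun _ h => h.false.elim, fun _ h => h.false.elim⟩,
      by simp⟩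
  | head hadj _ ih =>
    obtain ⟨θ₁, h₁⟩ := hadj.exists_isResidualUnitFlow
    obtain ⟨θ₂, h₂⟩ := ih
    exact ⟨θ₁ + θ₂, h₁.add h₂⟩

theorem sum_Eout_le_sum_Ein_of_closed {d : E → ℝ} (hd : N.netInflow d = 0) (S : Finset V)
    (hpos : ∀ e ∈ N.Eint, N.head e ∈ S → 0 < d e → N.tail e ∈ S)
    (hneg : ∀ e ∈ N.Eint, N.tail e ∈ S → d e < 0 → N.head e ∈ S) :
    ∑ e ∈ N.Eout with N.tail e ∈ S, d e ≤ ∑ e ∈ N.Ein with N.head e ∈ S, d e := by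
  have h := N.sum_netInflow d S
  simp only [hd, Pi.zero_apply, sum_const_zero, filter_union,
    sum_union (disjoint_filter_filter N.disj_in_int),
    sum_union (disjoint_filter_filter N.disj_out_int)] at h
  have hint : ∑ e ∈ N.Eint with N.head e ∈ S, d e - ∑ e ∈ N.Eint with N.tail e ∈ S, d e ≤ 0 := by
    rw [sum_filter, sum_filter, ← sum_sub_distrib]
    refine sum_nonpos fun e he => ?_
    by_cases hh : N.head e ∈ S <;> by_cases ht : N.tail e ∈ S <;> simp only [hh, ht, if_true,
      if_false, sub_self, le_refl, zero_sub, sub_zero, neg_nonpos]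
    · exact not_lt.1 fun hde => ht (hpos e he hh hde)
    · exact not_lt.1 fun hde => hh (hneg e he ht hde)
  linarith

theorem exists_residual_path {d : E → ℝ} (hd : N.netInflow d = 0) {T : Finset E}
    (hT : T ⊆ N.Eout) (hout : ∀ e ∈ N.Eout, e ∉ T → 0 ≤ d e) (hsum : 0 < ∑ e ∈ T, d e) :
    ∃ a ∈ N.Ein, 0 < d a ∧ ∃ b ∈ T, 0 < d b ∧
      ReflTransGen (N.ResidualAdj d) (N.head a) (N.tail b) := by
  classical
  by_contra! hno
  set S : Finset V :=
    univ.filter fun v => ∃ b ∈ T, 0 < d b ∧ ReflTransGen (N.ResidualAdj d) v (N.tail b) with hS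
  have hmem : ∀ v, v ∈ S ↔ ∃ b ∈ T, 0 < d b ∧ ReflTransGen (N.ResidualAdj d) v (N.tail b) := by
    simp [hS]
  have hcut := sum_Eout_le_sum_Ein_of_closed hd S
    (fun e he hh hde => by
      obtain ⟨b, hb, hdb, hp⟩ := (hmem _).1 hh
      exact (hmem _).2 ⟨b, hb, hdb, hp.head ⟨e, he, .inl ⟨rfl, rfl, hde⟩⟩⟩)
    (fun e he ht hde => by
      obtain ⟨b, hb, hdb, hp⟩ := (hmem _).1 ht
      exact (hmem _).2 ⟨b, hb, hdb, hp.head ⟨e, he, .inr ⟨rfl, rfl, hde⟩⟩⟩)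
  have hin : ∑ e ∈ N.Ein with N.head e ∈ S, d e ≤ 0 := sum_nonpos fun a ha => by
    obtain ⟨haE, haS⟩ := mem_filter.1 ha
    obtain ⟨b, hb, hdb, hp⟩ := (hmem _).1 haS
    exact not_lt.1 fun hda => hno a haE hda b hb hdb hp
  have hT_le : ∑ e ∈ T, d e ≤ ∑ e ∈ T with N.tail e ∈ S, d e := by
    rw [← sum_filter_add_sum_filter_not T (N.tail · ∈ S)]
    have : ∑ e ∈ T with N.tail e ∉ S, d e ≤ 0 := sum_nonpos fun b hb => by
      obtain ⟨hbT, hbS⟩ := mem_filter.1 hb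
      exact not_lt.1 fun hdb => hbS ((hmem _).2 ⟨b, hbT, hdb, .refl⟩)
    linarith
  have hle_Eout : ∑ e ∈ T with N.tail e ∈ S, d e ≤ ∑ e ∈ N.Eout with N.tail e ∈ S, d e :=
    sum_le_sum_of_subset_of_nonneg (filter_subset_filter _ hT) fun e he heT =>
      hout e (mem_filter.1 he).1 fun heT' => heT (mem_filter.2 ⟨heT', (mem_filter.1 he).2⟩)
  linarith

theorem Feasible.exists_feasible_add_smul {g χ : E → ℝ} (hg : N.Feasible g)
    (hχ : N.netInflow χ = 0) (hup : ∀ e, 0 < χ e → g e < N.cap e)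
    (hdown : ∀ e, χ e < 0 → 0 < g e) : ∃ t : ℝ, 0 < t ∧ N.Feasible (g + t • χ) := by
  obtain ⟨hg0, hgcap, hgnet⟩ := N.feasible_iff.1 hg
  have hedge : ∀ e, ∀ᶠ t in 𝓝[>] (0 : ℝ), 0 ≤ g e + t * χ e ∧ g e + t * χ e ≤ N.cap e := by
    intro e
    have hlim : Tendsto (fun t => g e + t * χ e) (𝓝[>] 0) (𝓝 (g e)) :=
      ((by fun_prop : Continuous fun t : ℝ => g e + t * χ e).tendsto' 0 (g e)
          (by simp)).mono_left nhdsWithin_le_nhds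
    rcases lt_trichotomy (χ e) 0 with hneg | hzero | hpos
    · filter_upwards [self_mem_nhdsWithin, hlim.eventually (lt_mem_nhds (hdown e hneg))]
        with t (ht : 0 < t) hgt
      exact ⟨hgt.le, by nlinarith [hgcap e]⟩
    · exact .of_forall fun t => by simp [hzero, hg0 e, hgcap e]
    · filter_upwards [self_mem_nhdsWithin, hlim.eventually (gt_mem_nhds (hup e hpos))]
        with t (ht : 0 < t) hlt
      exact ⟨by nlinarith [hg0 e], hlt.le⟩
  obtain ⟨t, ht, (ht0 : 0 < t)⟩ := ((eventually_all.2 hedge).and self_mem_nhdsWithin).exists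
  refine ⟨t, ht0, N.feasible_iff.2 ⟨fun e => (ht e).1, fun e => (ht e).2, ?_⟩⟩
  rw [map_add, map_smul, hgnet, hχ, smul_zero, add_zero]

theorem exists_augment_of_reflTransGen {A B : Finset E} (hA : A ⊆ N.Ein) (hB : B ⊆ N.Eout)
    {f d : E → ℝ} (hf : f ∈ N.flowsFromTo A B) (hup : ∀ e, 0 < d e → f e < N.cap e)
    (hdown : ∀ e, d e < 0 → 0 < f e) {a b : E} (ha : a ∈ A) (hb : b ∈ B)
    (hda : 0 < d a) (hdb : 0 < d b) (hpath : ReflTransGen (N.ResidualAdj d) (N.head a) (N.tail b)) :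
    ∃ f' ∈ N.flowsFromTo A B, ∑ e ∈ A, f e < ∑ e ∈ A, f' e ∧ ∀ e ∈ N.Eout, f e ≤ f' e := by
  obtain ⟨θ, hθ⟩ := exists_isResidualUnitFlow hpath
  set χ : E → ℝ := θ + Pi.single a 1 + Pi.single b 1 with hχ_def
  have hχ_ext : ∀ e ∉ N.Eint, χ e = (Pi.single a 1 : E → ℝ) e + (Pi.single b 1 : E → ℝ) e :=
    fun e he => by simp [hχ_def, hθ.support e he, add_assoc]
  have hχ_nonneg : ∀ e ∉ N.Eint, 0 ≤ χ e := fun e he => by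
    rw [hχ_ext e he, Pi.single_apply, Pi.single_apply]
    split_ifs <;> norm_num
  have hχ_conf : IsConformal χ d :=
    (hθ.conformal.add (isConformal_piSingle (by simpa))).add (isConformal_piSingle (by simpa))
  have hχ_net : N.netInflow χ = 0 := by
    rw [hχ_def, map_add, map_add, hθ.netInflow_eq, netInflow_piSingle_of_mem_Ein N (hA ha),
      netInflow_piSingle_of_mem_Eout N (hB hb)]
    abel
  obtain ⟨t, ht, hfeas⟩ := hf.1.exists_feasible_add_smul hχ_net
    (fun e he => hup e (hχ_conf.1 e he)) (fun e he => hdown e (hχ_conf.2 e he))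
  have hab : b ∉ A := fun h => N.notMem_Eout_of_mem_Ein (hA h) (hB hb)
  have hχ_A : ∑ e ∈ A, χ e = 1 := by
    rw [sum_congr rfl fun e he => hχ_ext e (N.notMem_Eint_of_mem_Ein (hA he)), sum_add_distrib,
      sum_pi_single', sum_pi_single', if_pos ha, if_neg hab, add_zero]
  refine ⟨f + t • χ, ⟨hfeas, fun e he => ?_⟩, ?_, fun e he => ?_⟩
  · have hfe : f e = 0 := hf.2 e he
    have : e ∉ N.Eint ∧ e ≠ a ∧ e ≠ b := by
      rcases mem_union.1 he with he | he <;> obtain ⟨he, he'⟩ := mem_sdiff.1 he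
      · exact ⟨N.notMem_Eint_of_mem_Ein he, by rintro rfl; exact he' ha,
          by rintro rfl; exact N.notMem_Eout_of_mem_Ein he (hB hb)⟩
      · exact ⟨N.notMem_Eint_of_mem_Eout he,
          by rintro rfl; exact N.notMem_Eout_of_mem_Ein (hA ha) he, by rintro rfl; exact he' hb⟩
    simp [hfe, hχ_ext e this.1, Pi.single_eq_of_ne this.2.1, Pi.single_eq_of_ne this.2.2]
  · simp only [Pi.add_apply, Pi.smul_apply, smul_eq_mul, sum_add_distrib, ← mul_sum, hχ_A]
    linarith
  · simpa using mul_nonneg ht.le (hχ_nonneg e (N.notMem_Eint_of_mem_Eout he))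

theorem exists_augment_of_sum_lt {A B B' : Finset E} (hA : A ⊆ N.Ein) (hB : B ⊆ N.Eout)
    {f f₁ : E → ℝ} (hf : f ∈ N.flowsFromTo A B) (hf₁ : f₁ ∈ N.flowsFromTo A B')
    (hlt : ∑ e ∈ B, f e < ∑ e ∈ B, f₁ e) :
    ∃ f' ∈ N.flowsFromTo A B, ∑ e ∈ A, f e < ∑ e ∈ A, f' e ∧ ∀ e ∈ N.Eout, f e ≤ f' e := by
  obtain ⟨hf0, -, hfnet⟩ := N.feasible_iff.1 hf.1
  obtain ⟨hf₁0, hf₁cap, hf₁net⟩ := N.feasible_iff.1 hf₁.1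
  obtain ⟨a, haE, hda, b, hb, hdb, hpath⟩ := exists_residual_path (d := f₁ - f)
    (by rw [map_sub, hf₁net, hfnet, sub_zero]) hB
    (fun e he heB => by simp [hf.2 e (mem_union_right _ (mem_sdiff.2 ⟨he, heB⟩)), hf₁0 e])
    (by simpa [sum_sub_distrib] using hlt)
  have haA : a ∈ A := by
    by_contra haA
    have := hf₁.2 a (mem_union_left _ (mem_sdiff.2 ⟨haE, haA⟩))
    simp only [Pi.sub_apply, this, zero_sub, neg_pos] at hda
    linarith [hf0 a]
  exact exists_augment_of_reflTransGen hA hB hf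
    (fun e he => (sub_pos.1 he).trans_le (hf₁cap e)) (fun e he => (hf₁0 e).trans_lt (sub_neg.1 he))
    haA hb hda hdb hpath

theorem sum_le_maxFromTo {A B B' : Finset E} (hA : A ⊆ N.Ein) (hB : B ⊆ N.Eout) {g : E → ℝ}
    (hg : g ∈ N.flowsFromTo A B') : ∑ e ∈ B, g e ≤ N.maxFromTo A B := by
  obtain ⟨h, hh, hhA⟩ := N.exists_sum_eq_maxFromTo A B
  by_contra! hlt
  rw [← hhA, ← sum_eq_sum_of_mem_flowsFromTo hA hB hh] at hlt
  obtain ⟨h', hh', hgt, -⟩ := exists_augment_of_sum_lt hA hB hh hg hlt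
  exact (le_maxFromTo hh').not_gt (hhA ▸ hgt)

theorem exists_sum_eq_maxFromTo_of_subset {A B B' : Finset E} (hA : A ⊆ N.Ein)
    (hB : B ⊆ N.Eout) (hB' : B' ⊆ B) :
    ∃ g ∈ N.flowsFromTo A B,
      ∑ e ∈ A, g e = N.maxFromTo A B ∧ ∑ e ∈ B', g e = N.maxFromTo A B' := by
  set K := N.flowsFromTo A B ∩ {g | N.maxFromTo A B' ≤ ∑ e ∈ B', g e}
  have hK : IsCompact K := (N.isCompact_flowsFromTo A B).inter_right
    (isClosed_le continuous_const (continuous_finsetSum _ fun e _ => continuous_apply e))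
  obtain ⟨h, hh, hhA⟩ := N.exists_sum_eq_maxFromTo A B'
  have hhK : h ∈ K :=
    ⟨flowsFromTo_mono hB' hh, ((sum_eq_sum_of_mem_flowsFromTo hA (hB'.trans hB) hh).trans hhA).ge⟩
  obtain ⟨g, hgK, hgmax⟩ := hK.exists_isMaxOn ⟨h, hhK⟩
    (continuous_finsetSum A fun e _ => continuous_apply e).continuousOn
  refine ⟨g, hgK.1, le_antisymm (le_maxFromTo hgK.1) ?_,
    le_antisymm (sum_le_maxFromTo hA (hB'.trans hB) hgK.1) hgK.2⟩
  obtain ⟨g₀, hg₀, hg₀A⟩ := N.exists_sum_eq_maxFromTo A B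
  by_contra! hlt
  rw [← hg₀A, ← sum_eq_sum_of_mem_flowsFromTo hA hB hg₀,
    ← sum_eq_sum_of_mem_flowsFromTo hA hB hgK.1] at hlt
  obtain ⟨g', hg', hgt, hmono⟩ := exists_augment_of_sum_lt hA hB hgK.1 hg₀ hlt
  have hg'K : g' ∈ K := ⟨hg', hgK.2.trans (sum_le_sum fun e he => hmono e (hB (hB' he)))⟩
  exact (hgmax hg'K).not_gt hgt

theorem sum_le_maxFromTo_union_sub {A B1 B2 : Finset E} (hA : A ⊆ N.Ein) (hB1 : B1 ⊆ N.Eout)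
    (hB2 : B2 ⊆ N.Eout) (hdisj : Disjoint B1 B2) {f f' : E → ℝ} (hf : ∀ e, 0 ≤ f e)
    (hf' : ∀ e, 0 ≤ f' e) (hff' : f + f' ∈ N.flowsFromTo A (B1 ∪ B2))
    (hf'B2 : ∑ e ∈ B2, f' e = N.maxFromTo A B2) :
    ∑ e ∈ B1, f e ≤ N.maxFromTo A (B1 ∪ B2) - N.maxFromTo A B2 := by
  have hval := sum_eq_sum_of_mem_flowsFromTo hA (union_subset hB1 hB2) hff'
  have hmax := le_maxFromTo hff'
  simp only [Pi.add_apply, sum_add_distrib, sum_union hdisj] at hval hmax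
  have := sum_nonneg fun e (_ : e ∈ B2) => hf e
  have := sum_nonneg fun e (_ : e ∈ B1) => hf' e
  linarith

theorem exists_split_sum_eq_maxFromTo_union_sub {A B1 B2 : Finset E} (hA : A ⊆ N.Ein)
    (hB1 : B1 ⊆ N.Eout) (hB2 : B2 ⊆ N.Eout) (hdisj : Disjoint B1 B2) :
    ∃ f f' : E → ℝ, (∀ e, 0 ≤ f e) ∧ (∀ e, 0 ≤ f' e) ∧ N.Feasible (f + f') ∧
      ∑ e ∈ A, f' e = N.maxFromTo A B2 ∧ ∑ e ∈ B2, f' e = N.maxFromTo A B2 ∧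
      (∀ e ∈ (N.Ein \ A) ∪ (N.Eout \ (B1 ∪ B2)), f e + f' e = 0) ∧
      N.maxFromTo A (B1 ∪ B2) - N.maxFromTo A B2 = ∑ e ∈ B1, f e := by
  obtain ⟨g, hg, hgA, hgB2⟩ :=
    exists_sum_eq_maxFromTo_of_subset hA (union_subset hB1 hB2) subset_union_right
  have hg0 := (N.feasible_iff.1 hg.1).1
  have hM2 : 0 ≤ N.maxFromTo A B2 := N.maxFromTo_nonneg A B2
  have hM : N.maxFromTo A B2 ≤ N.maxFromTo A (B1 ∪ B2) := N.maxFromTo_mono subset_union_right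
  -- when `M(A, B1 ∪ B2) = 0` also `M(A, B2) = 0`, and the junk value `c = 0` still works
  set c := N.maxFromTo A B2 / N.maxFromTo A (B1 ∪ B2)
  have hc0 : 0 ≤ c := div_nonneg hM2 (hM2.trans hM)
  have hc1 : c ≤ 1 := div_le_one_of_le₀ hM (hM2.trans hM)
  have hAout : ∀ e ∈ N.Eout, e ∉ A := fun e he heA => N.notMem_Eout_of_mem_Ein (hA heA) he
  set f' : E → ℝ := fun e => if e ∈ A then c * g e else if e ∈ B2 then g e else 0 with hf'
  have hf'_le : ∀ e, f' e ≤ g e := fun e => by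
    simp only [hf']
    split_ifs
    exacts [mul_le_of_le_one_left (hg0 e) hc1, le_rfl, hg0 e]
  refine ⟨g - f', f', fun e => sub_nonneg.2 (hf'_le e), fun e => ?_, by simpa using hg.1, ?_, ?_,
    fun e he => by simpa using hg.2 e he, ?_⟩
  · simp only [hf']
    split_ifs
    exacts [mul_nonneg hc0 (hg0 e), hg0 e, le_rfl]
  · rw [sum_congr rfl fun e he => if_pos he, ← mul_sum, hgA]
    exact div_mul_cancel_of_imp fun h => le_antisymm (h ▸ hM) hM2
  · rw [← hgB2]
    exact sum_congr rfl fun e he => by simp [hf', hAout e (hB2 he), he]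
  · have hval := sum_eq_sum_of_mem_flowsFromTo hA (union_subset hB1 hB2) hg
    rw [sum_union hdisj, hgA, hgB2] at hval
    rw [← hval, add_sub_cancel_right]
    exact sum_congr rfl fun e he => by
      simp [hf', hAout e (hB1 he), disjoint_left.1 hdisj he]

end

/-- `maxFromToAft N (A,B1 | A,B2) = maxFromTo N A (B1 ∪ B2) - maxFromTo N A B2`. -/
theorem stmt6 (N : FlowNetwork V E) (A B1 B2 : Finset E)
    (hA : A ⊆ N.Ein) (hB1 : B1 ⊆ N.Eout) (hB2 : B2 ⊆ N.Eout)
    (hdisj : Disjoint B1 B2) :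
    N.maxFromToAftOut A B1 B2 = N.maxFromTo A (B1 ∪ B2) - N.maxFromTo A B2 := by
  refine IsGreatest.csSup_eq ⟨exists_split_sum_eq_maxFromTo_union_sub hA hB1 hB2 hdisj, ?_⟩
  rintro x ⟨f, f', hf, hf', hfeas, -, hf'B2, hvan, rfl⟩
  exact sum_le_maxFromTo_union_sub hA hB1 hB2 hdisj hf hf' ⟨hfeas, hvan⟩ hf'B2

end FlowNetwork
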